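/- arXiv:2006.00462 — 2 statements merged into one kernel-verified Lean document; each statement's English description precedes it below -/
import Mathlib

section
/- Let X be a reflexive Banach space and let Ω ⊂ X be strongly subamenable at x̄ ∈ Ω, i.e., Ω is closed and there exist a neighborhood U of x̄, a normed space Y, a mapping f : X → Y that is twice continuously differentiable around x̄, a closed convex set Θ ⊂ Y with f(x̄) ∈ Θ, and κ > 0 such that Ω ∩ U = {x ∈ U : f(x) ∈ Θ} and dist(x; Ω) ≤ κ·dist(f(x); Θ) for all x ∈ U. Then Ω is prox-regular at x̄ for every normal vector v̄ ∈ N⁻_Ω(x̄): there exist r > 0, a neighborhood U' of x̄, and a bounded neighborhood V of v̄ in the norm topology of X* such that ⟨v, u − x⟩ ≤ r‖u − x‖² whenever x, u ∈ Ω ∩ U' and v ∈ N⁻_Ω(x) ∩ V. -/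
/-! Near `xb`, convexity of `Θ` and the second-order Taylor expansion of `f` put the image of the
midpoint of two points of `Ω` within `O(‖z - y‖²)` of `Θ`; by the subregularity estimate the
midpoint itself is then within `O(‖z - y‖²)` of `Ω`. Starting from `u ∈ Ω` and repeatedly taking a
nearly nearest point of `Ω` to the midpoint with `x`, one gets points `w k ∈ Ω` for which
`2 ^ k • (w k - x)` is Cauchy. Its limit is a contingent tangent vector at `x` within
`O(‖u - x‖²)` of `u - x`, and testing a Dini–Hadamard normal against it gives the inequality. -/

open Filter Topology Set Metric Pointwise

noncomputable section

variable {E : Type*} [NormedAddCommGroup E] [NormedSpace ℝ E]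

/-- Bouligand–Severi contingent tangent cone. -/
def contTangent (Ω : Set E) (x : E) : Set E :=
  {u | ∃ t : ℕ → ℝ, ∃ v : ℕ → E,
    (∀ k, 0 < t k) ∧ Tendsto t atTop (𝓝 0) ∧ Tendsto v atTop (𝓝 u) ∧
    ∀ k, x + t k • v k ∈ Ω}

/-- Dini–Hadamard subnormal cone. -/
def subNormal (Ω : Set E) (x : E) : Set (E →L[ℝ] ℝ) :=
  {v | ∀ u ∈ contTangent Ω x, v u ≤ 0}

/-- Normal cone of convex analysis. -/
def convNormal (Θ : Set E) (y : E) : Set (E →L[ℝ] ℝ) :=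
  {l | ∀ z ∈ Θ, l (z - y) ≤ 0}

/-- Difference quotient of an extended-real-valued function. -/
def diffQuot (φ : E → EReal) (x : E) (t : ℝ) (u : E) : EReal :=
  ((t⁻¹ : ℝ) : EReal) * (φ (x + t • u) - φ x)

/-- Dini–Hadamard subderivative. -/
def subDeriv (φ : E → EReal) (x : E) (u : E) : EReal :=
  Filter.liminf (fun p : ℝ × E => diffQuot φ x p.1 p.2) ((𝓝[>] (0:ℝ)) ×ˢ 𝓝 u)

/-- Dini–Hadamard subdifferential. -/
def subDiff (φ : E → EReal) (x : E) : Set (E →L[ℝ] ℝ) :=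
  {v | ∀ u, (v u : EReal) ≤ subDeriv φ x u}

/-- Proper extended-real-valued function. -/
def properFun (ψ : E → EReal) : Prop := (∀ u, ψ u ≠ ⊥) ∧ ∃ u, ψ u ≠ ⊤

def epiSet (g : E → EReal) : Set (E × ℝ) := {p | g p.1 ≤ (p.2 : EReal)}

/-- Painlevé–Kuratowski sequential outer limit as t ↓ 0. -/
def outerLim {α : Type*} [TopologicalSpace α] (S : ℝ → Set α) : Set α :=
  {z | ∃ t : ℕ → ℝ, ∃ w : ℕ → α, (∀ k, 0 < t k) ∧ Tendsto t atTop (𝓝 0) ∧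
    Tendsto w atTop (𝓝 z) ∧ ∀ k, w k ∈ S (t k)}

/-- Painlevé–Kuratowski sequential inner limit as t ↓ 0. -/
def innerLim {α : Type*} [TopologicalSpace α] (S : ℝ → Set α) : Set α :=
  {z | ∀ t : ℕ → ℝ, (∀ k, 0 < t k) → Tendsto t atTop (𝓝 0) →
    ∃ w : ℕ → α, Tendsto w atTop (𝓝 z) ∧ ∀ᶠ k in atTop, w k ∈ S (t k)}

/-- Epi-differentiability at a point. -/
def epiDiffAt (φ : E → EReal) (x : E) : Prop :=
  outerLim (fun t => epiSet (fun u => diffQuot φ x t u)) = epiSet (subDeriv φ x) ∧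
  innerLim (fun t => epiSet (fun u => diffQuot φ x t u)) = epiSet (subDeriv φ x)

/-- Relative Lipschitz continuity around x w.r.t. Ω with constant ℓ. -/
def RelLipschitzOn (φ : E → EReal) (Ω : Set E) (x : E) (ℓ : ℝ) : Prop :=
  ∃ U ∈ 𝓝 x, ∀ y ∈ Ω ∩ U, ∀ z ∈ Ω ∩ U, φ y - φ z ≤ ((ℓ * ‖y - z‖ : ℝ) : EReal)

def RelLipschitzAround (φ : E → EReal) (Ω : Set E) (x : E) : Prop :=
  ∃ ℓ : ℝ, 0 ≤ ℓ ∧ RelLipschitzOn φ Ω x ℓ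

/-- Local Lipschitz continuity of an extended-real-valued function around x (finite nearby). -/
def LocLipschitzAt (φ : E → EReal) (x : E) : Prop :=
  ∃ ℓ : ℝ, ∃ U ∈ 𝓝 x, (∀ z ∈ U, φ z ≠ ⊤) ∧
    ∀ z ∈ U, ∀ w ∈ U, φ z - φ w ≤ ((ℓ * ‖z - w‖ : ℝ) : EReal)

/-- Dini–Hadamard regularity. -/
def DHRegular (φ : E → EReal) (x : E) : Prop :=
  ∀ u, sSup ((fun v : E →L[ℝ] ℝ => (v u : EReal)) '' subDiff φ x) = subDeriv φ x u

def weakStarClosure (S : Set (E →L[ℝ] ℝ)) : Set (E →L[ℝ] ℝ) :=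
  closure (show Set (WeakDual ℝ E) from S)

def IsWeakStarClosed (S : Set (E →L[ℝ] ℝ)) : Prop :=
  IsClosed (show Set (WeakDual ℝ E) from S)

open scoped NNReal

section

variable {F : Type*} [NormedAddCommGroup F] [NormedSpace ℝ F]

theorem ContDiffAt.exists_closedBall_norm_sub_fderiv_le_sq {f : E → F} {x₀ : E}
    (hf : ContDiffAt ℝ 2 f x₀) {s : Set E} (hs : s ∈ 𝓝 x₀) :
    ∃ ρ > 0, ∃ K : ℝ≥0, closedBall x₀ ρ ⊆ s ∧ ∀ a ∈ closedBall x₀ ρ, ∀ b ∈ closedBall x₀ ρ,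
      ‖f b - f a - fderiv ℝ f a (b - a)‖ ≤ K * ‖b - a‖ ^ 2 := by
  obtain ⟨K, t, ht, hlip⟩ := (hf.fderiv_right (m := 1) (by norm_num)).exists_lipschitzOnWith
  have hdiff : ∀ᶠ y in 𝓝 x₀, DifferentiableAt ℝ f y :=
    (hf.eventually (by simp)).mono fun y hy => hy.differentiableAt (by norm_num)
  obtain ⟨ρ, hρ, hball⟩ := nhds_basis_closedBall.mem_iff.1 (inter_mem (inter_mem hs ht) hdiff)
  refine ⟨ρ, hρ, K, fun y hy => (hball hy).1.1, fun a ha b hb => ?_⟩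
  have hseg : segment ℝ a b ⊆ closedBall x₀ ρ := (convex_closedBall x₀ ρ).segment_subset ha hb
  have hderiv : ∀ w ∈ segment ℝ a b, ‖fderiv ℝ f w - fderiv ℝ f a‖ ≤ K * ‖b - a‖ := by
    intro w hw
    have hwa : ‖w - a‖ ≤ ‖b - a‖ := by
      obtain ⟨θ, ⟨hθ₀, hθ₁⟩, rfl⟩ := (segment_eq_image' ℝ a b ▸ hw :)
      rw [add_sub_cancel_left, norm_smul, Real.norm_of_nonneg hθ₀]
      exact mul_le_of_le_one_left (norm_nonneg _) hθ₁
    calc ‖fderiv ℝ f w - fderiv ℝ f a‖ ≤ K * ‖w - a‖ := by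
          simpa only [dist_eq_norm] using
            hlip.dist_le_mul w (hball (hseg hw)).1.2 a (hball ha).1.2
      _ ≤ K * ‖b - a‖ := by gcongr
  calc ‖f b - f a - fderiv ℝ f a (b - a)‖ ≤ K * ‖b - a‖ * ‖b - a‖ :=
        (convex_segment a b).norm_image_sub_le_of_norm_fderiv_le'
          (fun w hw => (hball (hseg hw)).2) hderiv (left_mem_segment ℝ a b)
          (right_mem_segment ℝ a b)
    _ = K * ‖b - a‖ ^ 2 := by ring

theorem norm_midpoint_sub_map_midpoint_le {f : E → F} (A : E →L[ℝ] F) {y z : E} {K : ℝ}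
    (hy : ‖f y - f (midpoint ℝ y z) - A (y - midpoint ℝ y z)‖ ≤ K * ‖y - midpoint ℝ y z‖ ^ 2)
    (hz : ‖f z - f (midpoint ℝ y z) - A (z - midpoint ℝ y z)‖ ≤ K * ‖z - midpoint ℝ y z‖ ^ 2) :
    ‖midpoint ℝ (f y) (f z) - f (midpoint ℝ y z)‖ ≤ K / 4 * ‖z - y‖ ^ 2 := by
  set m := midpoint ℝ y z
  have hym : ‖y - m‖ = ‖z - y‖ / 2 := by
    rw [left_sub_midpoint, norm_smul, invOf_eq_inv, norm_inv, Real.norm_two, norm_sub_rev]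
    ring
  have hzm : ‖z - m‖ = ‖z - y‖ / 2 := by
    rw [right_sub_midpoint, norm_smul, invOf_eq_inv, norm_inv, Real.norm_two]
    ring
  have hsplit : midpoint ℝ (f y) (f z) - f m = (2⁻¹ : ℝ) •
      ((f y - f m - A (y - m)) + (f z - f m - A (z - m))) := by
    have hA : A (y - m) + A (z - m) = 0 := by
      rw [← map_add, left_sub_midpoint, right_sub_midpoint, ← smul_add]
      simp
    rw [midpoint_eq_smul_add, invOf_eq_inv]
    linear_combination (norm := module) (2⁻¹ : ℝ) • hA
  calc ‖midpoint ℝ (f y) (f z) - f m‖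
      ≤ 2⁻¹ * (‖f y - f m - A (y - m)‖ + ‖f z - f m - A (z - m)‖) := by
        rw [hsplit, norm_smul, Real.norm_of_nonneg (by norm_num)]
        gcongr
        exact norm_add_le _ _
    _ ≤ 2⁻¹ * (K * ‖y - m‖ ^ 2 + K * ‖z - m‖ ^ 2) := by gcongr
    _ = K / 4 * ‖z - y‖ ^ 2 := by rw [hym, hzm]; ring

theorem infDist_midpoint_le_of_subamenable {f : E → F} {Ω s : Set E} {Θ : Set F} {κ K : ℝ}
    (hκ : 0 ≤ κ) (hΘ : Convex ℝ Θ) (hs : Convex ℝ s) (hfΘ : MapsTo f (Ω ∩ s) Θ)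
    (hsub : ∀ x ∈ s, infDist x Ω ≤ κ * infDist (f x) Θ)
    (htaylor : ∀ a ∈ s, ∀ b ∈ s, ‖f b - f a - fderiv ℝ f a (b - a)‖ ≤ K * ‖b - a‖ ^ 2)
    {y z : E} (hy : y ∈ Ω ∩ s) (hz : z ∈ Ω ∩ s) :
    infDist (midpoint ℝ y z) Ω ≤ κ * K / 4 * ‖z - y‖ ^ 2 := by
  have hm : midpoint ℝ y z ∈ s := hs.midpoint_mem hy.2 hz.2
  have hfm : infDist (f (midpoint ℝ y z)) Θ ≤ K / 4 * ‖z - y‖ ^ 2 :=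
    calc infDist (f (midpoint ℝ y z)) Θ ≤ dist (f (midpoint ℝ y z)) (midpoint ℝ (f y) (f z)) :=
          infDist_le_dist_of_mem (hΘ.midpoint_mem (hfΘ hy) (hfΘ hz))
      _ ≤ K / 4 * ‖z - y‖ ^ 2 := by
          rw [dist_eq_norm']
          exact norm_midpoint_sub_map_midpoint_le _ (htaylor _ hm _ hy.2) (htaylor _ hm _ hz.2)
  calc infDist (midpoint ℝ y z) Ω ≤ κ * infDist (f (midpoint ℝ y z)) Θ := hsub _ hm
    _ ≤ κ * (K / 4 * ‖z - y‖ ^ 2) := by gcongr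
    _ = κ * K / 4 * ‖z - y‖ ^ 2 := by ring

end

theorem exists_tendsto_norm_sub_le_of_norm_succ_sub_le {G : Type*} [NormedAddCommGroup G]
    [CompleteSpace G] {u : ℕ → G} {C : ℝ} (hC : 0 ≤ C)
    (hstep : ∀ k, ‖u k - u 0‖ ≤ C → ‖u (k + 1) - u k‖ ≤ C / 2 / 2 ^ k) :
    ∃ L, Tendsto u atTop (𝓝 L) ∧ ‖u 0 - L‖ ≤ C := by
  have hinv : ∀ k, ‖u k - u 0‖ ≤ C * (1 - 1 / 2 ^ k) := by
    intro k
    induction k with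
    | zero => simp
    | succ k ih =>
      have hk : ‖u (k + 1) - u k‖ ≤ C / 2 / 2 ^ k :=
        hstep k (ih.trans (mul_le_of_le_one_right hC (by simp)))
      calc ‖u (k + 1) - u 0‖ ≤ ‖u (k + 1) - u k‖ + ‖u k - u 0‖ :=
            norm_sub_le_norm_sub_add_norm_sub _ _ _
        _ ≤ C / 2 / 2 ^ k + C * (1 - 1 / 2 ^ k) := add_le_add hk ih
        _ = C * (1 - 1 / 2 ^ (k + 1)) := by field_simp; ring
  have hdist : ∀ k, dist (u k) (u (k + 1)) ≤ C / 2 / 2 ^ k := fun k => by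
    rw [dist_comm, dist_eq_norm]
    exact hstep k ((hinv k).trans (mul_le_of_le_one_right hC (by simp)))
  obtain ⟨L, hL⟩ := cauchySeq_tendsto_of_complete (cauchySeq_of_le_geometric_two hdist)
  exact ⟨L, hL, dist_eq_norm (u 0) L ▸ dist_le_of_le_geometric_two_of_tendsto₀ hdist hL⟩

theorem zero_mem_contTangent {Ω : Set E} {x : E} (hx : x ∈ Ω) : (0 : E) ∈ contTangent Ω x :=
  ⟨fun k => 1 / (k + 1), fun _ => 0, fun k => Nat.one_div_pos_of_nat,
    tendsto_one_div_add_atTop_nhds_zero_nat, tendsto_const_nhds, fun k => by simpa using hx⟩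

theorem exists_mem_contTangent_norm_sub_le [CompleteSpace E] {Ω : Set E} {x ω : E} {c R : ℝ}
    (hc : 0 ≤ c) (hx : x ∈ Ω) (hω : ω ∈ Ω)
    (hmid : ∀ z ∈ Ω, ‖z - x‖ ≤ R → infDist (midpoint ℝ x z) Ω ≤ c * ‖z - x‖ ^ 2)
    (hR : 2 * ‖ω - x‖ ≤ R) (hsmall : 4 * (4 * c + 1) * ‖ω - x‖ ≤ 1) :
    ∃ L ∈ contTangent Ω x, ‖ω - x - L‖ ≤ 4 * (4 * c + 1) * ‖ω - x‖ ^ 2 := by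
  set d := ‖ω - x‖
  rcases (norm_nonneg (ω - x)).eq_or_lt with hd | hd
  · exact ⟨0, zero_mem_contTangent hx, by simp [← hd, d]⟩
  have hnear : ∀ (k : ℕ) (p : E), ∃ q ∈ Ω, ‖q - p‖ < infDist p Ω + (d / 2 ^ k) ^ 2 := by
    intro k p
    obtain ⟨q, hq, hpq⟩ := (infDist_lt_iff ⟨x, hx⟩).1
      (lt_add_of_pos_right (infDist p Ω) (by positivity : 0 < (d / 2 ^ k) ^ 2))
    exact ⟨q, hq, by rwa [dist_comm, dist_eq_norm] at hpq⟩
  choose next hnextΩ hnext using hnear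
  let w : ℕ → E := fun k => Nat.rec ω (fun k z => next k (midpoint ℝ x z)) k
  have hw0 : w 0 = ω := rfl
  have hwΩ : ∀ k, w k ∈ Ω := by
    rintro (_ | k)
    exacts [hω, hnextΩ _ _]
  let u : ℕ → E := fun k => (2 : ℝ) ^ k • (w k - x)
  have hu_succ : ∀ k, u (k + 1) - u k = (2 : ℝ) ^ (k + 1) • (w (k + 1) - midpoint ℝ x (w k)) := by
    intro k
    simp only [u, midpoint_eq_smul_add, invOf_eq_inv, pow_succ]
    module
  have hw_norm : ∀ k, ‖w k - x‖ = ‖u k‖ / 2 ^ k := by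
    intro k
    rw [norm_smul, Real.norm_of_nonneg (by positivity), mul_div_cancel_left₀ _ (by positivity)]
  have hstep : ∀ k, ‖u k - u 0‖ ≤ 4 * (4 * c + 1) * d ^ 2 →
      ‖u (k + 1) - u k‖ ≤ 4 * (4 * c + 1) * d ^ 2 / 2 / 2 ^ k := by
    intro k hk
    have hu0 : ‖u 0‖ = d := by simp [u, hw0, d]
    have hwk : ‖w k - x‖ ≤ 2 * d / 2 ^ k := by
      rw [hw_norm]
      gcongr
      calc ‖u k‖ ≤ ‖u 0‖ + ‖u k - u 0‖ := norm_le_insert' _ _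
        _ ≤ d + 4 * (4 * c + 1) * d ^ 2 := by rw [hu0]; gcongr
        _ ≤ 2 * d := by nlinarith
    have hwR : ‖w k - x‖ ≤ R :=
      hwk.trans ((div_le_self (by positivity) (one_le_pow₀ one_le_two)).trans hR)
    calc ‖u (k + 1) - u k‖ = 2 ^ (k + 1) * ‖w (k + 1) - midpoint ℝ x (w k)‖ := by
          rw [hu_succ, norm_smul, Real.norm_of_nonneg (by positivity)]
      _ ≤ 2 ^ (k + 1) * (c * ‖w k - x‖ ^ 2 + (d / 2 ^ k) ^ 2) := by
          gcongr
          exact (hnext _ _).le.trans (by gcongr; exact hmid _ (hwΩ k) hwR)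
      _ ≤ 2 ^ (k + 1) * (c * (2 * d / 2 ^ k) ^ 2 + (d / 2 ^ k) ^ 2) := by gcongr
      _ = 4 * (4 * c + 1) * d ^ 2 / 2 / 2 ^ k := by field_simp; ring
  obtain ⟨L, hL, hLu⟩ := exists_tendsto_norm_sub_le_of_norm_succ_sub_le (by positivity) hstep
  refine ⟨L, ⟨fun k => (2 ^ k)⁻¹, u, fun k => by positivity, ?_, hL, fun k => ?_⟩, ?_⟩
  · exact tendsto_inv_atTop_zero.comp (tendsto_pow_atTop_atTop_of_one_lt one_lt_two)
  · simpa [u, inv_smul_smul₀ (pow_ne_zero k (two_ne_zero' ℝ))] using hwΩ k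
  · simpa [u, hw0] using hLu

theorem apply_le_of_mem_subNormal {Ω : Set E} {x w L : E} {v : E →L[ℝ] ℝ}
    (hv : v ∈ subNormal Ω x) (hL : L ∈ contTangent Ω x) : v w ≤ ‖v‖ * ‖w - L‖ :=
  calc v w = v L + v (w - L) := by rw [← map_add, add_sub_cancel]
    _ ≤ 0 + ‖v‖ * ‖w - L‖ := add_le_add (hv L hL) ((le_abs_self _).trans (v.le_opNorm _))
    _ = ‖v‖ * ‖w - L‖ := zero_add _

theorem exists_mem_nhds_apply_sub_le_of_infDist_midpoint_le [CompleteSpace E] {Ω : Set E}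
    {x₀ : E} {c ρ : ℝ} (hc : 0 ≤ c) (hρ : 0 < ρ)
    (hmid : ∀ y ∈ Ω ∩ closedBall x₀ ρ, ∀ z ∈ Ω ∩ closedBall x₀ ρ,
      infDist (midpoint ℝ y z) Ω ≤ c * ‖z - y‖ ^ 2) :
    ∃ U ∈ 𝓝 x₀, ∀ x ∈ Ω ∩ U, ∀ u ∈ Ω ∩ U, ∀ v ∈ subNormal Ω x,
      v (u - x) ≤ 4 * (4 * c + 1) * ‖v‖ * ‖u - x‖ ^ 2 := by
  set δ := min (ρ / 8) (8 * (4 * c + 1))⁻¹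
  have hδ : 0 < δ := lt_min (by positivity) (by positivity)
  refine ⟨ball x₀ δ, ball_mem_nhds x₀ hδ, ?_⟩
  rintro x ⟨hxΩ, hxδ⟩ u ⟨huΩ, huδ⟩ v hv
  rw [mem_ball_iff_norm] at hxδ huδ
  have hux : ‖u - x‖ < 2 * δ :=
    (norm_sub_le_norm_sub_add_norm_sub u x₀ x).trans_lt (by rw [norm_sub_rev x₀]; linarith)
  have hmid_x : ∀ z ∈ Ω, ‖z - x‖ ≤ ρ / 2 →
      infDist (midpoint ℝ x z) Ω ≤ c * ‖z - x‖ ^ 2 := by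
    intro z hz hzx
    have hx₀ : ‖x - x₀‖ ≤ ρ / 8 := hxδ.le.trans (min_le_left _ _)
    refine hmid x ⟨hxΩ, mem_closedBall_iff_norm.2 (by linarith)⟩ z ⟨hz, ?_⟩
    rw [mem_closedBall_iff_norm]
    calc ‖z - x₀‖ ≤ ‖z - x‖ + ‖x - x₀‖ := norm_sub_le_norm_sub_add_norm_sub _ _ _
      _ ≤ ρ := by linarith
  have hR : 2 * ‖u - x‖ ≤ ρ / 2 := by linarith [min_le_left (ρ / 8) (8 * (4 * c + 1))⁻¹]
  have hsmall : 4 * (4 * c + 1) * ‖u - x‖ ≤ 1 := by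
    have h8 : 8 * (4 * c + 1) * δ ≤ 1 :=
      (le_div_iff₀' (by positivity)).1 ((min_le_right _ _).trans (one_div _).ge)
    nlinarith
  obtain ⟨L, hL, huL⟩ := exists_mem_contTangent_norm_sub_le hc hxΩ huΩ hmid_x hR hsmall
  calc v (u - x) ≤ ‖v‖ * ‖u - x - L‖ := apply_le_of_mem_subNormal hv hL
    _ ≤ ‖v‖ * (4 * (4 * c + 1) * ‖u - x‖ ^ 2) := by gcongr
    _ = 4 * (4 * c + 1) * ‖v‖ * ‖u - x‖ ^ 2 := by ring

theorem proxregular_of_strongly_subamenable_general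
    {X Y : Type*} [NormedAddCommGroup X] [NormedSpace ℝ X] [CompleteSpace X]
    [NormedAddCommGroup Y] [NormedSpace ℝ Y]
    (Ω : Set X) (xb : X)
    (f : X → Y) (Θ : Set Y) (κ : ℝ) (U : Set X)
    (hU : U ∈ 𝓝 xb) (hf : ContDiffAt ℝ 2 f xb)
    (hΘconv : Convex ℝ Θ) (hκ : 0 < κ)
    (hrep : Ω ∩ U = {x ∈ U | f x ∈ Θ})
    (hsub : ∀ x ∈ U, infDist x Ω ≤ κ * infDist (f x) Θ) :
    ∀ vb ∈ subNormal Ω xb,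
      ∃ r : ℝ, 0 < r ∧ ∃ U' ∈ 𝓝 xb, ∃ V : Set (X →L[ℝ] ℝ),
        V ∈ 𝓝 vb ∧ Bornology.IsBounded V ∧
        ∀ x ∈ Ω ∩ U', ∀ u ∈ Ω ∩ U', ∀ v ∈ subNormal Ω x ∩ V,
          v (u - x) ≤ r * ‖u - x‖ ^ 2 := by
  intro vb _
  obtain ⟨ρ, hρ, K, hρU, htaylor⟩ := hf.exists_closedBall_norm_sub_fderiv_le_sq hU
  have hfΘ : MapsTo f (Ω ∩ closedBall xb ρ) Θ := fun x hx =>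
    (hrep.subset ⟨hx.1, hρU hx.2⟩ : x ∈ {x ∈ U | f x ∈ Θ}).2
  obtain ⟨U', hU', hprox⟩ := exists_mem_nhds_apply_sub_le_of_infDist_midpoint_le
    (by positivity) hρ fun y hy z hz => infDist_midpoint_le_of_subamenable hκ.le hΘconv
      (convex_closedBall xb ρ) hfΘ (fun x hx => hsub x (hρU hx)) htaylor hy hz
  set C := 4 * (4 * (κ * K / 4) + 1)
  refine ⟨C * (‖vb‖ + 1), by positivity, U', hU', ball vb 1, ball_mem_nhds vb one_pos,
    isBounded_ball, ?_⟩
  rintro x hx u hu v ⟨hv, hvb⟩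
  calc v (u - x) ≤ C * ‖v‖ * ‖u - x‖ ^ 2 := hprox x hx u hu v hv
    _ ≤ C * (‖vb‖ + 1) * ‖u - x‖ ^ 2 := by
        gcongr
        exact norm_le_norm_add_const_of_dist_le (mem_ball.1 hvb).le

/-- prox-regularity of strongly subamenable sets (subamenability data
`Y, f, Θ, κ, U` with `f` twice continuously differentiable around `xb`) in a
reflexive Banach space. -/
theorem proxregular_of_strongly_subamenable
    {X Y : Type*} [NormedAddCommGroup X] [NormedSpace ℝ X] [CompleteSpace X]
    [NormedAddCommGroup Y] [NormedSpace ℝ Y]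
    (hrefl : Function.Surjective ⇑(NormedSpace.inclusionInDoubleDual ℝ X))
    (Ω : Set X) (xb : X) (hxb : xb ∈ Ω) (hΩcl : IsClosed Ω)
    (f : X → Y) (Θ : Set Y) (κ : ℝ) (U : Set X)
    (hU : U ∈ 𝓝 xb) (hf : ContDiffAt ℝ 2 f xb)
    (hΘcl : IsClosed Θ) (hΘconv : Convex ℝ Θ) (hfxb : f xb ∈ Θ) (hκ : 0 < κ)
    (hrep : Ω ∩ U = {x ∈ U | f x ∈ Θ})
    (hsub : ∀ x ∈ U, infDist x Ω ≤ κ * infDist (f x) Θ) :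
    ∀ vb ∈ subNormal Ω xb,
      ∃ r : ℝ, 0 < r ∧ ∃ U' ∈ 𝓝 xb, ∃ V : Set (X →L[ℝ] ℝ),
        V ∈ 𝓝 vb ∧ Bornology.IsBounded V ∧
        ∀ x ∈ Ω ∩ U', ∀ u ∈ Ω ∩ U', ∀ v ∈ subNormal Ω x ∩ V,
          v (u - x) ≤ r * ‖u - x‖ ^ 2 :=
  proxregular_of_strongly_subamenable_general Ω xb f Θ κ U hU hf hΘconv hκ hrep hsub
end
end

section
/- Let X and Y be normed spaces and let x̄ be a local minimizer of the problem: minimize ϑ(x) subject to f(x) ∈ Θ. Assume that ϑ : X → ℝ is Lipschitz continuous around x̄ with constant ℓ ≥ 0 and Dini–Hadamard regular at x̄, that f : X → Y is continuously differentiable around x̄, that Θ ⊂ Y is convex and locally closed around ȳ := f(x̄) ∈ Θ, and that there exist κ > 0 and a neighborhood U of x̄ with dist(x; Ω) ≤ κ·dist(f(x); Θ) for all x ∈ U, where Ω := {x ∈ X : f(x) ∈ Θ}. Then there exists λ ∈ Y* such that 0 ∈ ∂⁻ϑ(x̄) + ∇f(x̄)*λ, λ ∈ N_Θ(ȳ),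 and ‖λ‖ ≤ ℓκ. -/
open Filter Topology Set Metric Pointwise

noncomputable section

variable {E : Type*} [NormedAddCommGroup E] [NormedSpace ℝ E]

/-!
Lipschitz continuity of `ϑ` (Clarke's exact penalization) together with metric subregularity makes
`x̄` a local minimizer of `ϑ + ℓκ · dist(f(·), Θ)`. For `k` in the radial cone `R` of `Θ` at `ȳ`
we have `ȳ + t k ∈ Θ` for small `t > 0`, so `dist(f(x̄ + t u'), Θ) ≤ t ‖∇f(x̄) u - k‖ + o(t)` as
`t ↓ 0, u' → u`; hence `dϑ(x̄)(u) + ℓκ · dist(∇f(x̄) u, R) ≥ 0`. By regularity `dϑ(x̄)` is a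
supremum of linear functionals, hence sublinear, and `ℓκ · dist(·, R)` is sublinear because `R` is
a convex cone. Hahn–Banach applied to `(u, y) ↦ dϑ(x̄)(u) + ℓκ · dist(y, R)` and to the zero
functional on the graph of `∇f(x̄)` produces `v ≤ dϑ(x̄)` and `λ ≤ ℓκ · dist(·, R)` with
`v + λ ∘ ∇f(x̄) = 0`; the bound `dist(y, R) ≤ ‖y‖` gives `‖λ‖ ≤ ℓκ`, and `dist(z - ȳ, R) = 0` for
`z ∈ Θ` gives `λ ∈ N_Θ(ȳ)`.
-/

open scoped NNReal

section Sublinear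

variable {V W : Type*} [AddCommGroup V] [Module ℝ V] [AddCommGroup W] [Module ℝ W]

structure IsSublinear (N : V → ℝ) : Prop where
  map_smul_of_pos : ∀ c : ℝ, 0 < c → ∀ x, N (c • x) = c * N x
  map_add_le : ∀ x y, N (x + y) ≤ N x + N y

namespace IsSublinear

variable {p : V → ℝ} {q : W → ℝ}

theorem map_zero (hp : IsSublinear p) : p 0 = 0 := by
  have h := hp.map_smul_of_pos 2 two_pos 0
  rw [smul_zero] at h
  linarith

theorem const_mul (hp : IsSublinear p) {c : ℝ} (hc : 0 ≤ c) :
    IsSublinear fun x => c * p x where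
  map_smul_of_pos a ha x := by rw [hp.map_smul_of_pos a ha]; ring
  map_add_le x y := by
    rw [← mul_add]
    exact mul_le_mul_of_nonneg_left (hp.map_add_le x y) hc

theorem prod (hp : IsSublinear p) (hq : IsSublinear q) :
    IsSublinear fun z : V × W => p z.1 + q z.2 where
  map_smul_of_pos c hc z := by
    simp only [Prod.smul_fst, Prod.smul_snd, hp.map_smul_of_pos c hc, hq.map_smul_of_pos c hc]
    ring
  map_add_le z z' := by
    simp only [Prod.fst_add, Prod.snd_add]
    linarith [hp.map_add_le z.1 z'.1, hq.map_add_le z.2 z'.2]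

theorem exists_linear_le_of_nonneg_add_comp (hp : IsSublinear p) (hq : IsSublinear q)
    (A : V →ₗ[ℝ] W) (h : ∀ x, 0 ≤ p x + q (A x)) :
    ∃ (w : V →ₗ[ℝ] ℝ) (g : W →ₗ[ℝ] ℝ), (∀ x, w x ≤ p x) ∧ (∀ y, g y ≤ q y) ∧ w + g ∘ₗ A = 0 := by
  obtain ⟨Φ, hΦA, hΦ⟩ := exists_extension_of_le_sublinear ⟨LinearMap.graph A, 0⟩
    (fun z => p z.1 + q z.2) (hp.prod hq).map_smul_of_pos (hp.prod hq).map_add_le (by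
      rintro ⟨z, hz⟩
      rw [LinearMap.mem_graph_iff] at hz
      simpa [hz] using h z.1)
  refine ⟨Φ ∘ₗ LinearMap.inl ℝ V W, Φ ∘ₗ LinearMap.inr ℝ V W, fun x => ?_, fun y => ?_, ?_⟩
  · simpa [hq.map_zero] using hΦ (x, 0)
  · simpa [hp.map_zero] using hΦ (0, y)
  · ext x
    have hgraph := hΦA ⟨(x, A x), (LinearMap.mem_graph_iff A _).2 rfl⟩
    simpa [← map_add] using hgraph

end IsSublinear

theorem isSublinear_of_coe_eq_sSup {F : Type*} [FunLike F V ℝ] [LinearMapClass F ℝ V ℝ]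
    (S : Set F) {r : V → ℝ} (hr : ∀ x, (r x : EReal) = sSup ((fun v : F => (v x : EReal)) '' S)) :
    IsSublinear r := by
  have le_r : ∀ v ∈ S, ∀ x, v x ≤ r x := fun v hv x =>
    EReal.coe_le_coe_iff.1 <| (hr x).symm ▸ le_sSup ⟨v, hv, rfl⟩
  have r_le : ∀ x b, (∀ v ∈ S, v x ≤ b) → r x ≤ b := fun x b h =>
    EReal.coe_le_coe_iff.1 <| (hr x).symm ▸ sSup_le (by
      rintro _ ⟨v, hv, rfl⟩
      exact EReal.coe_le_coe_iff.2 (h v hv))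
  have smul_le : ∀ c : ℝ, 0 < c → ∀ x, r (c • x) ≤ c * r x := fun c hc x =>
    r_le _ _ fun v hv => by
      rw [map_smul, smul_eq_mul]
      exact mul_le_mul_of_nonneg_left (le_r v hv x) hc.le
  refine ⟨fun c hc x => le_antisymm (smul_le c hc x) ?_, fun x y => r_le _ _ fun v hv => ?_⟩
  · have h := smul_le c⁻¹ (inv_pos.2 hc) (c • x)
    rw [inv_smul_smul₀ hc.ne'] at h
    rwa [← le_inv_mul_iff₀ hc]
  · rw [map_add]
    exact add_le_add (le_r v hv x) (le_r v hv y)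

end Sublinear

section Normed

variable {X Y : Type*} [NormedAddCommGroup X] [NormedSpace ℝ X]
  [NormedAddCommGroup Y] [NormedSpace ℝ Y]

theorem LinearMap.norm_apply_le_of_le_mul_norm (w : X →ₗ[ℝ] ℝ) {C : ℝ}
    (h : ∀ y, w y ≤ C * ‖y‖) (y : X) : ‖w y‖ ≤ C * ‖y‖ := by
  rw [Real.norm_eq_abs, abs_le]
  refine ⟨?_, h y⟩
  have h' := h (-y)
  rw [map_neg, norm_neg] at h'
  linarith

theorem IsSublinear.exists_continuousLinearMap_le_of_nonneg_add_comp {p : X → ℝ} {q : Y → ℝ}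
    (hp : IsSublinear p) (hq : IsSublinear q) (A : X →L[ℝ] Y) (h : ∀ x, 0 ≤ p x + q (A x))
    {a b : ℝ} (hpa : ∀ x, p x ≤ a * ‖x‖) (hqb : ∀ y, q y ≤ b * ‖y‖) (hb : 0 ≤ b) :
    ∃ (w : X →L[ℝ] ℝ) (g : Y →L[ℝ] ℝ),
      (∀ x, w x ≤ p x) ∧ (∀ y, g y ≤ q y) ∧ w + g.comp A = 0 ∧ ‖g‖ ≤ b := by
  obtain ⟨w, g, hw, hg, hwg⟩ := hp.exists_linear_le_of_nonneg_add_comp hq A.toLinearMap h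
  refine ⟨w.mkContinuous a (w.norm_apply_le_of_le_mul_norm fun x => (hw x).trans (hpa x)),
    g.mkContinuous b (g.norm_apply_le_of_le_mul_norm fun y => (hg y).trans (hqb y)), hw, hg, ?_,
    LinearMap.mkContinuous_norm_le _ hb _⟩
  ext x
  exact LinearMap.congr_fun hwg x

end Normed

section RadialCone

variable {V : Type*} [AddCommGroup V] [Module ℝ V] {Θ : Set V} {y : V}

def radialCone (Θ : Set V) (y : V) : Set V := {k | ∃ t : ℝ, 0 < t ∧ y + t • k ∈ Θ}

theorem sub_mem_radialCone {z : V} (hz : z ∈ Θ) : z - y ∈ radialCone Θ y :=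
  ⟨1, one_pos, by rwa [one_smul, add_sub_cancel]⟩

theorem zero_mem_radialCone (hy : y ∈ Θ) : 0 ∈ radialCone Θ y := by
  simpa using sub_mem_radialCone (y := y) hy

theorem smul_mem_radialCone {c : ℝ} (hc : 0 < c) {k : V} (hk : k ∈ radialCone Θ y) :
    c • k ∈ radialCone Θ y := by
  obtain ⟨t, ht, hk⟩ := hk
  refine ⟨t / c, div_pos ht hc, ?_⟩
  rwa [smul_smul, div_mul_cancel₀ t hc.ne']

theorem add_smul_mem_of_mem_radialCone (hΘ : Convex ℝ Θ) (hy : y ∈ Θ) {k : V}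
    (hk : k ∈ radialCone Θ y) : ∃ s : ℝ, 0 < s ∧ ∀ t ∈ Set.Ioc 0 s, y + t • k ∈ Θ := by
  obtain ⟨s, hs, hk⟩ := hk
  refine ⟨s, hs, fun t ht => ?_⟩
  have h := hΘ.add_smul_mem hy hk ⟨div_nonneg ht.1.le hs.le, div_le_one_of_le₀ ht.2 hs.le⟩
  rwa [smul_smul, div_mul_cancel₀ t hs.ne'] at h

theorem add_mem_radialCone (hΘ : Convex ℝ Θ) (hy : y ∈ Θ) {k l : V}
    (hk : k ∈ radialCone Θ y) (hl : l ∈ radialCone Θ y) : k + l ∈ radialCone Θ y := by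
  obtain ⟨s, hs, hks⟩ := add_smul_mem_of_mem_radialCone hΘ hy hk
  obtain ⟨s', hs', hls⟩ := add_smul_mem_of_mem_radialCone hΘ hy hl
  set t := min s s'
  have ht : 0 < t := lt_min hs hs'
  refine ⟨t / 2, half_pos ht, ?_⟩
  convert hΘ (hks t ⟨ht, min_le_left _ _⟩) (hls t ⟨ht, min_le_right _ _⟩)
    (by norm_num : (0 : ℝ) ≤ 1 / 2) (by norm_num : (0 : ℝ) ≤ 1 / 2) (by norm_num) using 1
  module

theorem eventually_add_smul_mem_of_mem_radialCone (hΘ : Convex ℝ Θ) (hy : y ∈ Θ) {k : V}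
    (hk : k ∈ radialCone Θ y) : ∀ᶠ t in 𝓝[>] (0 : ℝ), y + t • k ∈ Θ := by
  obtain ⟨s, hs, hks⟩ := add_smul_mem_of_mem_radialCone hΘ hy hk
  filter_upwards [Ioo_mem_nhdsGT hs] with t ht using hks t ⟨ht.1, ht.2.le⟩

end RadialCone

section InfDist

variable {F : Type*} [NormedAddCommGroup F] [NormedSpace ℝ F]

theorem le_mul_infDist_of_forall {α : Type*} [PseudoMetricSpace α] {K : Set α} {x : α}
    {b c : ℝ} (hK : K.Nonempty) (hc : 0 ≤ c) (h : ∀ k ∈ K, b ≤ c * dist x k) :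
    b ≤ c * infDist x K := by
  have : Nonempty K := hK.to_subtype
  rw [infDist_eq_iInf, Real.mul_iInf_of_nonneg hc]
  exact le_ciInf fun k => h k k.2

theorem infDist_add_le_of_add_mem {G : Type*} [SeminormedAddCommGroup G] {K : Set G}
    (hK : K.Nonempty) (hadd : ∀ a ∈ K, ∀ b ∈ K, a + b ∈ K) (y z : G) :
    infDist (y + z) K ≤ infDist y K + infDist z K := by
  have h : ∀ a ∈ K, ∀ b ∈ K, infDist (y + z) K ≤ dist y a + dist z b := fun a ha b hb =>
    (infDist_le_dist_of_mem (hadd a ha b hb)).trans (dist_add_add_le y z a b)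
  have h' : ∀ b ∈ K, infDist (y + z) K - dist z b ≤ infDist y K := fun b hb =>
    (le_infDist hK).2 fun a ha => by linarith [h a ha b hb]
  have h'' : infDist (y + z) K - infDist y K ≤ infDist z K :=
    (le_infDist hK).2 fun b hb => by linarith [h' b hb]
  linarith

theorem infDist_smul_of_smul_mem {K : Set F} (hsmul : ∀ c : ℝ, 0 < c → ∀ a ∈ K, c • a ∈ K)
    {c : ℝ} (hc : 0 < c) (y : F) : infDist (c • y) K = c * infDist y K := by
  have hK : c • K = K := by
    ext a
    rw [mem_smul_set_iff_inv_smul_mem₀ hc.ne']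
    refine ⟨fun ha => ?_, hsmul _ (inv_pos.2 hc) a⟩
    simpa [smul_smul, hc.ne'] using hsmul c hc _ ha
  simpa [hK, Real.norm_of_nonneg hc.le] using infDist_smul₀ hc.ne' K y

theorem infDist_radialCone_le_norm {Θ : Set F} {y : F} (hy : y ∈ Θ) (z : F) :
    infDist z (radialCone Θ y) ≤ ‖z‖ := by
  simpa using infDist_le_dist_of_mem (x := z) (zero_mem_radialCone hy)

theorem isSublinear_infDist_radialCone {Θ : Set F} {y : F} (hΘ : Convex ℝ Θ) (hy : y ∈ Θ) :
    IsSublinear fun z => infDist z (radialCone Θ y) where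
  map_smul_of_pos _ hc := infDist_smul_of_smul_mem (fun _ hc _ => smul_mem_radialCone hc) hc
  map_add_le := infDist_add_le_of_add_mem ⟨0, zero_mem_radialCone hy⟩
    (fun _ ha _ hb => add_mem_radialCone hΘ hy ha hb)

end InfDist

section Subderivative

variable {F : Type*} [NormedAddCommGroup F] [NormedSpace ℝ F]

theorem tendsto_smul_nhdsGT_prod (u : E) :
    Tendsto (fun p : ℝ × E => p.1 • p.2) (𝓝[>] 0 ×ˢ 𝓝 u) (𝓝 0) := by
  simpa using ((tendsto_fst.mono_left (Filter.prod_mono_left _ nhdsWithin_le_nhds)).smul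
    tendsto_snd : Tendsto (fun p : ℝ × E => p.1 • p.2) (𝓝[>] 0 ×ˢ 𝓝 u) (𝓝 ((0 : ℝ) • u)))

theorem tendsto_add_smul_nhdsGT_prod (x u : E) :
    Tendsto (fun p : ℝ × E => x + p.1 • p.2) (𝓝[>] 0 ×ˢ 𝓝 u) (𝓝 x) := by
  simpa using tendsto_const_nhds.add (tendsto_smul_nhdsGT_prod u)

theorem HasFDerivAt.tendsto_slope_nhdsGT_prod {f : E → F} {f' : E →L[ℝ] F} {x : E}
    (hf : HasFDerivAt f f' x) (u : E) :
    Tendsto (fun p : ℝ × E => p.1⁻¹ • (f (x + p.1 • p.2) - f x)) (𝓝[>] 0 ×ˢ 𝓝 u)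
      (𝓝 (f' u)) := by
  refine hf.hasFDerivWithinAt.lim (s := univ) (tendsto_smul_nhdsGT_prod u)
    (Eventually.of_forall fun _ => mem_univ _) (tendsto_snd.congr' ?_)
  filter_upwards [prod_mem_prod self_mem_nhdsWithin univ_mem] with p hp
  rw [inv_smul_smul₀ (ne_of_gt hp.1)]

theorem diffQuot_coe (ϑ : E → ℝ) (x : E) (t : ℝ) (u : E) :
    diffQuot (fun z => (ϑ z : EReal)) x t u = ((t⁻¹ * (ϑ (x + t • u) - ϑ x) : ℝ) : EReal) := by
  rw [diffQuot, EReal.coe_mul, EReal.coe_sub]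

variable {ϑ : E → ℝ} {x u : E}

theorem le_subDeriv_of_tendsto {h : ℝ × E → ℝ} {c : ℝ} (hh : Tendsto h (𝓝[>] 0 ×ˢ 𝓝 u) (𝓝 c))
    (hle : ∀ᶠ p in 𝓝[>] 0 ×ˢ 𝓝 u, h p ≤ p.1⁻¹ * (ϑ (x + p.1 • p.2) - ϑ x)) :
    (c : EReal) ≤ subDeriv (fun z => (ϑ z : EReal)) x u := by
  rw [← ((continuous_coe_real_ereal.tendsto c).comp hh).liminf_eq, subDeriv]
  refine liminf_le_liminf ?_
  filter_upwards [hle] with p hp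
  rw [diffQuot_coe]
  exact EReal.coe_le_coe_iff.2 hp

theorem subDeriv_le_of_eventually {c : ℝ}
    (h : ∀ᶠ t in 𝓝[>] 0, t⁻¹ * (ϑ (x + t • u) - ϑ x) ≤ c) :
    subDeriv (fun z => (ϑ z : EReal)) x u ≤ c := by
  refine liminf_le_of_frequently_le' ?_
  refine (tendsto_id.prodMk (tendsto_const_nhds (x := u))).frequently (h.frequently.mono ?_)
  intro t ht
  rw [diffQuot_coe]
  exact EReal.coe_le_coe_iff.2 ht

variable {K : ℝ≥0} {U : Set E}

theorem LipschitzOnWith.abs_slope_le (hϑ : LipschitzOnWith K ϑ U) (hx : x ∈ U) {t : ℝ}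
    (ht : 0 < t) (htu : x + t • u ∈ U) : |t⁻¹ * (ϑ (x + t • u) - ϑ x)| ≤ K * ‖u‖ := by
  have h := hϑ.dist_le_mul _ htu _ hx
  rw [Real.dist_eq, dist_eq_norm, add_sub_cancel_left, norm_smul, Real.norm_of_nonneg ht.le]
    at h
  rw [abs_mul, abs_inv, abs_of_pos ht, inv_mul_le_iff₀ ht]
  linarith

theorem LipschitzOnWith.subDeriv_le (hU : U ∈ 𝓝 x) (hϑ : LipschitzOnWith K ϑ U) (u : E) :
    subDeriv (fun z => (ϑ z : EReal)) x u ≤ ((K * ‖u‖ : ℝ) : EReal) := by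
  refine subDeriv_le_of_eventually ?_
  have hmem : ∀ᶠ t in 𝓝[>] (0 : ℝ), x + t • u ∈ U :=
    ((tendsto_add_smul_nhdsGT_prod x u).comp (tendsto_id.prodMk tendsto_const_nhds)).eventually_mem
      hU
  filter_upwards [self_mem_nhdsWithin, hmem] with t ht htu
  exact (abs_le.1 (hϑ.abs_slope_le (mem_of_mem_nhds hU) ht htu)).2

theorem LipschitzOnWith.neg_le_subDeriv (hU : U ∈ 𝓝 x) (hϑ : LipschitzOnWith K ϑ U) (u : E) :
    ((-(K * ‖u‖) : ℝ) : EReal) ≤ subDeriv (fun z => (ϑ z : EReal)) x u := by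
  refine le_subDeriv_of_tendsto (h := fun p => -(K * ‖p.2‖))
    ((tendsto_snd.norm.const_mul _).neg) ?_
  have hmem : ∀ᶠ p in 𝓝[>] (0 : ℝ) ×ˢ 𝓝 u, x + p.1 • p.2 ∈ U :=
    (tendsto_add_smul_nhdsGT_prod x u).eventually_mem hU
  filter_upwards [prod_mem_prod self_mem_nhdsWithin univ_mem, hmem] with p hp htu
  exact (abs_le.1 (hϑ.abs_slope_le (mem_of_mem_nhds hU) hp.1 htu)).1

theorem LipschitzOnWith.coe_toReal_subDeriv (hU : U ∈ 𝓝 x) (hϑ : LipschitzOnWith K ϑ U)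
    (u : E) :
    (((subDeriv (fun z => (ϑ z : EReal)) x u).toReal : ℝ) : EReal) =
      subDeriv (fun z => (ϑ z : EReal)) x u :=
  EReal.coe_toReal ((hϑ.subDeriv_le hU u).trans_lt (EReal.coe_lt_top _)).ne
    ((EReal.bot_lt_coe _).trans_le (hϑ.neg_le_subDeriv hU u)).ne'

theorem neg_mul_norm_sub_le_subDeriv {f : E → F} {f' : E →L[ℝ] F} {Θ : Set F} {c : ℝ}
    (hc : 0 ≤ c) (hpen : ∀ᶠ z in 𝓝 x, ϑ x ≤ ϑ z + c * infDist (f z) Θ)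
    (hf : HasFDerivAt f f' x) (hΘ : Convex ℝ Θ) (hfx : f x ∈ Θ) {k : F}
    (hk : k ∈ radialCone Θ (f x)) (u : E) :
    ((-(c * ‖f' u - k‖) : ℝ) : EReal) ≤ subDeriv (fun z => (ϑ z : EReal)) x u := by
  refine le_subDeriv_of_tendsto
    (((hf.tendsto_slope_nhdsGT_prod u).sub_const k).norm.const_mul c).neg ?_
  filter_upwards [prod_mem_prod self_mem_nhdsWithin univ_mem,
    (tendsto_add_smul_nhdsGT_prod x u).eventually hpen,
    tendsto_fst.eventually (eventually_add_smul_mem_of_mem_radialCone hΘ hfx hk)]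
    with ⟨t, v⟩ ⟨ht, _⟩ hpen hmem
  have ht : 0 < t := ht
  have hdist : infDist (f (x + t • v)) Θ ≤ t * ‖t⁻¹ • (f (x + t • v) - f x) - k‖ := by
    calc infDist (f (x + t • v)) Θ ≤ dist (f (x + t • v)) (f x + t • k) :=
          infDist_le_dist_of_mem hmem
      _ = ‖t • (t⁻¹ • (f (x + t • v) - f x) - k)‖ := by
          rw [dist_eq_norm, smul_sub, smul_inv_smul₀ ht.ne', sub_sub, add_comm (f x)]
      _ = t * ‖t⁻¹ • (f (x + t • v) - f x) - k‖ := by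
          rw [norm_smul, Real.norm_of_nonneg ht.le]
  have := mul_le_mul_of_nonneg_left hdist hc
  rw [le_inv_mul_iff₀ ht]
  dsimp only at hpen ⊢
  linarith

theorem neg_mul_infDist_radialCone_le_subDeriv {f : E → F} {f' : E →L[ℝ] F} {Θ : Set F} {c : ℝ}
    (hc : 0 ≤ c) (hpen : ∀ᶠ z in 𝓝 x, ϑ x ≤ ϑ z + c * infDist (f z) Θ)
    (hf : HasFDerivAt f f' x) (hΘ : Convex ℝ Θ) (hfx : f x ∈ Θ) (u : E) :
    ((-(c * infDist (f' u) (radialCone Θ (f x))) : ℝ) : EReal) ≤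
      subDeriv (fun z => (ϑ z : EReal)) x u := by
  have h k (hk : k ∈ radialCone Θ (f x)) := neg_mul_norm_sub_le_subDeriv hc hpen hf hΘ hfx hk u
  generalize subDeriv (fun z => (ϑ z : EReal)) x u = S at h ⊢
  induction S with
  | bot => exact absurd (h 0 (zero_mem_radialCone hfx)) (not_le.2 (EReal.bot_lt_coe _))
  | coe s =>
    rw [EReal.coe_le_coe_iff, neg_le]
    refine le_mul_infDist_of_forall ⟨0, zero_mem_radialCone hfx⟩ hc fun k hk => ?_
    rw [dist_eq_norm, neg_le]
    exact EReal.coe_le_coe_iff.1 (h k hk)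
  | top => exact le_top

end Subderivative

theorem LipschitzOnWith.eventually_le_add_mul_infDist {α : Type*} [PseudoMetricSpace α]
    {ϑ : α → ℝ} {K : ℝ≥0} {U Ω : Set α} {x : α} (hU : U ∈ 𝓝 x) (hϑ : LipschitzOnWith K ϑ U)
    (hx : x ∈ Ω) (hmin : IsLocalMinOn ϑ Ω x) :
    ∀ᶠ z in 𝓝 x, ϑ x ≤ ϑ z + K * infDist z Ω := by
  obtain ⟨ρ, hρ, hball⟩ :=
    Metric.eventually_nhds_iff_ball.1 ((eventually_nhdsWithin_iff.1 hmin).and hU)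
  filter_upwards [ball_mem_nhds x (half_pos hρ)] with z hz
  refine le_of_forall_pos_lt_add fun ε hε => ?_
  set δ := ε / (K + 1)
  have hδ : K * δ < ε := by
    rw [mul_div_assoc', div_lt_iff₀ (by positivity)]
    nlinarith
  obtain ⟨y, hyΩ, hzy⟩ := (infDist_lt_iff ⟨x, hx⟩).1
    (lt_min (lt_add_of_pos_right (infDist z Ω) (by positivity : 0 < δ))
      ((infDist_le_dist_of_mem hx).trans_lt hz))
  have hy : y ∈ ball x ρ := calc
    dist y x ≤ dist z y + dist z x := dist_triangle_left y x z
    _ < ρ / 2 + ρ / 2 := add_lt_add ((hzy.trans_le (min_le_right _ _))) hz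
    _ = ρ := add_halves ρ
  obtain ⟨hxy, hyU⟩ := hball y hy
  have hzU := (hball z (ball_subset_ball (half_le_self hρ.le) hz)).2
  calc ϑ x ≤ ϑ y := hxy hyΩ
    _ ≤ ϑ z + K * dist z y := by
        linarith [(abs_le.1 (Real.dist_eq _ _ ▸ hϑ.dist_le_mul z hzU y hyU)).1]
    _ ≤ ϑ z + K * (infDist z Ω + δ) := by gcongr; exact (hzy.trans_le (min_le_left _ _)).le
    _ < ϑ z + K * infDist z Ω + ε := by linarith

theorem LipschitzOnWith.eventually_le_add_mul_infDist_comp {α β : Type*} [PseudoMetricSpace α]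
    [PseudoMetricSpace β] {ϑ : α → ℝ} {f : α → β} {K : ℝ≥0} {κ : ℝ} {U : Set α} {Θ : Set β}
    {x : α} (hU : U ∈ 𝓝 x) (hϑ : LipschitzOnWith K ϑ U) (hx : f x ∈ Θ)
    (hmin : IsLocalMinOn ϑ (f ⁻¹' Θ) x)
    (hsubreg : ∀ᶠ z in 𝓝 x, infDist z (f ⁻¹' Θ) ≤ κ * infDist (f z) Θ) :
    ∀ᶠ z in 𝓝 x, ϑ x ≤ ϑ z + K * κ * infDist (f z) Θ := by
  filter_upwards [hϑ.eventually_le_add_mul_infDist hU hx hmin, hsubreg] with z hz hsub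
  rw [mul_assoc]
  exact hz.trans (by gcongr)

theorem dual_necessary_optimality_bounded_multipliers_general
    {X Y : Type*} [NormedAddCommGroup X] [NormedSpace ℝ X]
    [NormedAddCommGroup Y] [NormedSpace ℝ Y]
    (ϑ : X → ℝ) (f : X → Y) (f' : X →L[ℝ] Y) (Θ : Set Y) (xb : X) (ℓ κ : ℝ)
    (hℓ : 0 ≤ ℓ)
    (hϑlip : ∃ U ∈ 𝓝 xb, ∀ x ∈ U, ∀ y ∈ U, |ϑ x - ϑ y| ≤ ℓ * ‖x - y‖)
    (hϑreg : DHRegular (fun x => (ϑ x : EReal)) xb)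
    (hf' : HasFDerivAt f f' xb)
    (hΘconv : Convex ℝ Θ)
    (hfeas : f xb ∈ Θ)
    (hκ : 0 < κ)
    (hMSCQ : ∃ U ∈ 𝓝 xb, ∀ x ∈ U, infDist x {x' | f x' ∈ Θ} ≤ κ * infDist (f x) Θ)
    (hmin : ∃ U ∈ 𝓝 xb, ∀ x ∈ U, f x ∈ Θ → ϑ xb ≤ ϑ x) :
    ∃ lam : Y →L[ℝ] ℝ,
      (∃ v ∈ subDiff (fun x => (ϑ x : EReal)) xb, v + lam.comp f' = 0) ∧
      lam ∈ convNormal Θ (f xb) ∧ ‖lam‖ ≤ ℓ * κ := by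
  obtain ⟨U, hU, hlip⟩ := hϑlip
  have hϑ : LipschitzOnWith ℓ.toNNReal ϑ U := LipschitzOnWith.of_dist_le_mul fun x hx y hy => by
    rw [Real.coe_toNNReal _ hℓ, Real.dist_eq, dist_eq_norm]
    exact hlip x hx y hy
  have hℓκ : 0 ≤ ℓ * κ := mul_nonneg hℓ hκ.le
  have hpen : ∀ᶠ x in 𝓝 xb, ϑ xb ≤ ϑ x + ℓ * κ * infDist (f x) Θ := by
    obtain ⟨W, hW, hmin⟩ := hmin
    simpa [Real.coe_toNNReal _ hℓ] using hϑ.eventually_le_add_mul_infDist_comp hU hfeas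
      (mem_of_superset (inter_mem_nhdsWithin _ hW) fun x hx => hmin x hx.2 hx.1)
      (eventually_iff_exists_mem.2 hMSCQ)
  set r : X → ℝ := fun u => (subDeriv (fun x => (ϑ x : EReal)) xb u).toReal
  have hr : ∀ u, (r u : EReal) = subDeriv (fun x => (ϑ x : EReal)) xb u :=
    hϑ.coe_toReal_subDeriv hU
  have hkey : ∀ u, 0 ≤ r u + ℓ * κ * infDist (f' u) (radialCone Θ (f xb)) := fun u => by
    have := neg_mul_infDist_radialCone_le_subDeriv hℓκ hpen hf' hΘconv hfeas u
    rw [← hr, EReal.coe_le_coe_iff] at this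
    linarith
  have hr_sublinear : IsSublinear r :=
    isSublinear_of_coe_eq_sSup _ fun u => (hr u).trans (hϑreg u).symm
  have hr_le : ∀ u, r u ≤ ℓ * ‖u‖ := fun u => EReal.coe_le_coe_iff.1 <|
    (hr u).trans_le (by simpa [Real.coe_toNNReal _ hℓ] using hϑ.subDeriv_le hU u)
  obtain ⟨v, lam, hv, hlam, hvlam, hnorm⟩ :=
    hr_sublinear.exists_continuousLinearMap_le_of_nonneg_add_comp
      ((isSublinear_infDist_radialCone hΘconv hfeas).const_mul hℓκ) f' hkey hr_le
      (fun y => mul_le_mul_of_nonneg_left (infDist_radialCone_le_norm hfeas y) hℓκ) hℓκ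
  refine ⟨lam, ⟨v, fun u => hr u ▸ EReal.coe_le_coe_iff.2 (hv u), hvlam⟩, fun z hz => ?_, hnorm⟩
  simpa [infDist_zero_of_mem (sub_mem_radialCone hz)] using hlam (z - f xb)

/-- dual necessary optimality conditions with bounded multipliers
under the metric subregularity constraint qualification. -/
theorem dual_necessary_optimality_bounded_multipliers
    {X Y : Type*} [NormedAddCommGroup X] [NormedSpace ℝ X]
    [NormedAddCommGroup Y] [NormedSpace ℝ Y]
    (ϑ : X → ℝ) (f : X → Y) (f' : X →L[ℝ] Y) (Θ : Set Y) (xb : X) (ℓ κ : ℝ)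
    (hℓ : 0 ≤ ℓ)
    (hϑlip : ∃ U ∈ 𝓝 xb, ∀ x ∈ U, ∀ y ∈ U, |ϑ x - ϑ y| ≤ ℓ * ‖x - y‖)
    (hϑreg : DHRegular (fun x => (ϑ x : EReal)) xb)
    (hf : ContDiffAt ℝ 1 f xb) (hf' : HasFDerivAt f f' xb)
    (hΘconv : Convex ℝ Θ) (hΘloc : ∃ V ∈ 𝓝 (f xb), IsClosed (Θ ∩ V))
    (hfeas : f xb ∈ Θ)
    (hκ : 0 < κ)
    (hMSCQ : ∃ U ∈ 𝓝 xb, ∀ x ∈ U, infDist x {x' | f x' ∈ Θ} ≤ κ * infDist (f x) Θ)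
    (hmin : ∃ U ∈ 𝓝 xb, ∀ x ∈ U, f x ∈ Θ → ϑ xb ≤ ϑ x) :
    ∃ lam : Y →L[ℝ] ℝ,
      (∃ v ∈ subDiff (fun x => (ϑ x : EReal)) xb, v + lam.comp f' = 0) ∧
      lam ∈ convNormal Θ (f xb) ∧ ‖lam‖ ≤ ℓ * κ :=
  dual_necessary_optimality_bounded_multipliers_general ϑ f f' Θ xb ℓ κ hℓ hϑlip hϑreg hf' hΘconv
    hfeas hκ hMSCQ hmin
end
end
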